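/- Let {P_x : x = 1,...,d²} be a generalized symmetric informationally complete measurement with efficiency parameter η on a d-dimensional Hilbert space H (d ≥ 2). Then ∑_{x=1}^{d²} P_x ⊗ P_x = l(η)·I + r(η)·F_swap, where l(η) = (1 − dη)/(d² − 1) and r(η) = (d³η − 1)/(d(d² − 1)). -/
import Mathlib


open Matrix Kronecker BigOperators Complex
open scoped ComplexOrder

noncomputable section

/-- The swap operator on `ℂ^d ⊗ ℂ^d`, as a matrix: `F(u ⊗ v) = v ⊗ u`. -/
def swapM (d : ℕ) : Matrix (Fin d × Fin d) (Fin d × Fin d) ℂ :=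
  fun p q => if p.1 = q.2 ∧ p.2 = q.1 then 1 else 0

lemma swapM_mul_swapM {d : ℕ} : swapM d * swapM d = 1 := by
  ext ⟨i,j⟩ ⟨k,l⟩
  simp [mul_apply, swapM, one_apply, ite_and, Fintype.sum_prod_type, Prod.ext_iff]

lemma swapM_trace {d : ℕ} : (swapM d).trace = (d : ℂ) := by
  simp [Matrix.trace, Matrix.diag, swapM, Fintype.sum_prod_type, ite_and, Finset.sum_ite_eq]

lemma swapM_conjTranspose {d : ℕ} : (swapM d)ᴴ = swapM d := by
  ext ⟨i,j⟩ ⟨k,l⟩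
  simp only [conjTranspose_apply, swapM, apply_ite (star : ℂ → ℂ), star_one, star_zero]
  refine if_congr ?_ rfl rfl
  constructor <;> rintro ⟨a,b⟩ <;> exact ⟨b.symm, a.symm⟩

lemma kron_conjTranspose {d : ℕ} (A B : Matrix (Fin d) (Fin d) ℂ) :
    (A ⊗ₖ B)ᴴ = Aᴴ ⊗ₖ Bᴴ := by
  ext ⟨i,j⟩ ⟨k,l⟩
  simp [conjTranspose_apply, kroneckerMap_apply]

lemma trace_kron_swap {d : ℕ} (A B : Matrix (Fin d) (Fin d) ℂ) :
    ((A ⊗ₖ B) * swapM d).trace = (A * B).trace := by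
  simp [Matrix.trace, Matrix.diag, mul_apply, swapM, kroneckerMap_apply,
    Fintype.sum_prod_type, ite_and, mul_ite]

lemma trace_conj_self_zero {n : Type*} [Fintype n] [DecidableEq n]
    (M : Matrix n n ℂ) (h : (Mᴴ * M).trace = 0) : M = 0 := by
  have h2 : ((∑ j, ∑ i, Complex.normSq (M i j) : ℝ) : ℂ) = 0 := by
    rw [← h]
    push_cast
    simp [Matrix.trace, Matrix.diag, mul_apply, conjTranspose_apply,
      Complex.normSq_eq_conj_mul_self]
  rw [Complex.ofReal_eq_zero] at h2
  have h3 := (Finset.sum_eq_zero_iff_of_nonneg (fun j _ =>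
    Finset.sum_nonneg (fun i _ => Complex.normSq_nonneg (M i j)))).mp h2
  ext i j
  have h4 := (Finset.sum_eq_zero_iff_of_nonneg (fun i _ =>
    Complex.normSq_nonneg (M i j))).mp (h3 j (Finset.mem_univ j)) i (Finset.mem_univ i)
  simpa [Complex.normSq_eq_zero] using h4

theorem stmt4 (d : ℕ) (hd : 2 ≤ d) (η : ℝ)
    (hη1 : 1 / (d : ℝ) ^ 3 < η) (hη2 : η ≤ 1 / (d : ℝ) ^ 2)
    (P : Fin (d ^ 2) → Matrix (Fin d) (Fin d) ℂ)
    (hPos : ∀ x, (P x).PosSemidef)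
    (hPOVM : ∑ x, P x = 1)
    (hEff : ∀ x, (P x * P x).trace = (η : ℂ))
    (hSym : ∀ x y, x ≠ y → (P x * P y).trace =
      (((1 - η * d) / ((d : ℝ) * ((d : ℝ) ^ 2 - 1)) : ℝ) : ℂ)) :
    ∑ x : Fin (d ^ 2), (P x) ⊗ₖ (P x) =
      (((1 - (d : ℝ) * η) / ((d : ℝ) ^ 2 - 1) : ℝ) : ℂ) •
        (1 : Matrix (Fin d × Fin d) (Fin d × Fin d) ℂ)
      + ((((d : ℝ) ^ 3 * η - 1) / ((d : ℝ) * ((d : ℝ) ^ 2 - 1)) : ℝ) : ℂ) • swapM d := by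
  have hdR : (2 : ℝ) ≤ (d : ℝ) := by exact_mod_cast hd
  have hd0 : (d : ℝ) ≠ 0 := by positivity
  have hd1 : ((d : ℝ) ^ 2 - 1) ≠ 0 := by nlinarith
  set c : ℝ := (1 - η * d) / ((d : ℝ) * ((d : ℝ) ^ 2 - 1)) with hc
  set l : ℝ := (1 - (d : ℝ) * η) / ((d : ℝ) ^ 2 - 1) with hl
  set r : ℝ := ((d : ℝ) ^ 3 * η - 1) / ((d : ℝ) * ((d : ℝ) ^ 2 - 1)) with hr
  have hcard : (Finset.univ : Finset (Fin (d ^ 2))).card = d ^ 2 := by simp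
  have herase : ∀ x : Fin (d ^ 2), (Finset.univ.erase x).card = d ^ 2 - 1 := by
    intro x; rw [Finset.card_erase_of_mem (Finset.mem_univ x), hcard]
  have h1d2 : 1 ≤ d ^ 2 := Nat.one_le_pow _ _ (by omega)
  have hcast : ((d ^ 2 - 1 : ℕ) : ℂ) = (d : ℂ) ^ 2 - 1 := by
    push_cast [Nat.cast_sub h1d2]; ring
  -- trace of each P x is 1/d
  have htr : ∀ x, (P x).trace = ((1 / (d : ℝ) : ℝ) : ℂ) := by
    intro x
    have step : (P x).trace = ∑ y, (P x * P y).trace := by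
      calc (P x).trace = (P x * ∑ y, P y).trace := by rw [hPOVM, mul_one]
        _ = ∑ y, (P x * P y).trace := by rw [Finset.mul_sum, trace_sum]
    rw [step, ← Finset.sum_erase_add _ _ (Finset.mem_univ x), hEff,
      Finset.sum_congr rfl (fun y hy => hSym x y (Ne.symm (Finset.ne_of_mem_erase hy))),
      Finset.sum_const, herase, nsmul_eq_mul, hcast]
    have hd0c : (d : ℂ) ≠ 0 := by exact_mod_cast (Complex.ofReal_ne_zero.mpr hd0)
    have hd1c : ((d : ℂ) ^ 2 - 1) ≠ 0 := by
      rw [show ((d:ℂ)^2 - 1) = (((d:ℝ)^2 - 1 : ℝ) : ℂ) by push_cast; ring]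
      exact Complex.ofReal_ne_zero.mpr hd1
    rw [hc]
    push_cast
    field_simp
    ring
  set T : Matrix (Fin d × Fin d) (Fin d × Fin d) ℂ := ∑ x : Fin (d ^ 2), (P x) ⊗ₖ (P x) with hT
  set R : Matrix (Fin d × Fin d) (Fin d × Fin d) ℂ :=
    ((l : ℂ) • 1 + (r : ℂ) • swapM d) with hR
  have hd0c : (d : ℂ) ≠ 0 := by exact_mod_cast (Complex.ofReal_ne_zero.mpr hd0)
  have hd1c : ((d : ℂ) ^ 2 - 1) ≠ 0 := by
    rw [show ((d:ℂ)^2 - 1) = (((d:ℝ)^2 - 1 : ℝ) : ℂ) by push_cast; ring]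
    exact Complex.ofReal_ne_zero.mpr hd1
  -- key traces
  have htrT : T.trace = 1 := by
    rw [hT, trace_sum]
    simp only [trace_kronecker, htr]
    rw [Finset.sum_const, hcard, nsmul_eq_mul]
    push_cast
    field_simp
  have htrTF : (T * swapM d).trace = (d : ℂ) ^ 2 * (η : ℂ) := by
    rw [hT, Finset.sum_mul, trace_sum]
    simp only [trace_kron_swap, hEff]
    rw [Finset.sum_const, hcard, nsmul_eq_mul]
    push_cast
    ring
  have htrTT : (T * T).trace =
      (d : ℂ) ^ 2 * (η : ℂ) ^ 2 + (d : ℂ) ^ 2 * ((d : ℂ) ^ 2 - 1) * (c : ℂ) ^ 2 := by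
    rw [hT, Finset.sum_mul_sum, trace_sum]
    have : ∀ x : Fin (d ^ 2), (∑ y, ((P x ⊗ₖ P x) * (P y ⊗ₖ P y)).trace) =
        (η : ℂ) ^ 2 + ((d : ℂ) ^ 2 - 1) * (c : ℂ) ^ 2 := by
      intro x
      have : ∀ y : Fin (d ^ 2), ((P x ⊗ₖ P x) * (P y ⊗ₖ P y)).trace
          = ((P x * P y).trace) ^ 2 := by
        intro y
        rw [← Matrix.mul_kronecker_mul, trace_kronecker, sq]
      simp only [this]
      rw [← Finset.sum_erase_add _ _ (Finset.mem_univ x), hEff,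
        Finset.sum_congr rfl (fun y hy => by
          rw [hSym x y (Ne.symm (Finset.ne_of_mem_erase hy))]),
        Finset.sum_const, herase, nsmul_eq_mul, hcast]
      ring
    simp only [trace_sum]
    rw [Finset.sum_congr rfl (fun x _ => this x), Finset.sum_const, hcard, nsmul_eq_mul]
    push_cast
    ring
  have htrOne : (1 : Matrix (Fin d × Fin d) (Fin d × Fin d) ℂ).trace = (d : ℂ) ^ 2 := by
    rw [trace_one]
    simp [Fintype.card_prod]
    push_cast
    ring
  -- S := T - R has trace (Sᴴ S) = 0
  set S := T - R with hS
  have hSherm : Sᴴ = S := by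
    rw [hS, conjTranspose_sub, hR, conjTranspose_add, conjTranspose_smul,
      conjTranspose_smul, conjTranspose_one, swapM_conjTranspose, hT, conjTranspose_sum]
    simp only [kron_conjTranspose, (fun x => (hPos x).1.eq : ∀ x, (P x)ᴴ = P x)]
    simp [Complex.star_def, Complex.conj_ofReal]
  have htrRT : (R * T).trace = (T * R).trace := trace_mul_comm R T
  have htrTR : (T * R).trace = (l : ℂ) * T.trace + (r : ℂ) * (T * swapM d).trace := by
    rw [hR, mul_add, trace_add, Matrix.mul_smul, Matrix.mul_smul, trace_smul, trace_smul,
      mul_one]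
    simp
  have htrRR : (R * R).trace =
      (l : ℂ) ^ 2 * (d : ℂ) ^ 2 + 2 * (l : ℂ) * (r : ℂ) * (d : ℂ)
        + (r : ℂ) ^ 2 * (d : ℂ) ^ 2 := by
    rw [hR]
    rw [add_mul, mul_add, mul_add]
    simp only [smul_smul, Matrix.smul_mul, Matrix.mul_smul, one_mul, mul_one,
      swapM_mul_swapM, trace_add, trace_smul, htrOne, swapM_trace, smul_eq_mul]
    ring
  have hkey : (Sᴴ * S).trace = 0 := by
    rw [hSherm, hS, Matrix.sub_mul, Matrix.mul_sub, Matrix.mul_sub, trace_sub, trace_sub,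
      trace_sub, htrTT, htrTR, htrRT, htrTR, htrRR, htrT, htrTF]
    rw [hc, hl, hr]
    push_cast
    field_simp
    ring
  have hS0 : S = 0 := trace_conj_self_zero S hkey
  rw [hS] at hS0
  exact sub_eq_zero.mp hS0
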